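/- Let B ∈ ℝ^{n×n} be a symmetric matrix, let N ≥ 1, and let w₁, …, w_N be independent standard Gaussian random vectors in ℝⁿ. Then E[ ( (1/N) Σ_{i=1}^N wᵢᵀ B wᵢ − trace(B) )² ] = (2/N) ‖B‖_F², i.e., the variance of the N-sample Girard–Hutchinson trace estimator equals (2/N) times the squared Frobenius norm of B. -/

import Mathlib

open MeasureTheory ProbabilityTheory Matrix

/-- Matrix logarithm of a real symmetric matrix, obtained by applying the real logarithm
to the eigenvalues in a spectral decomposition. -/
noncomputable def matLog {n : ℕ} (B : Matrix (Fin n) (Fin n) ℝ) : Matrix (Fin n) (Fin n) ℝ :=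
  if hB : B.IsHermitian then
    (hB.eigenvectorUnitary : Matrix (Fin n) (Fin n) ℝ) *
      Matrix.diagonal (fun i => Real.log (hB.eigenvalues i)) *
      (star (hB.eigenvectorUnitary : Matrix (Fin n) (Fin n) ℝ))
  else 0

open scoped Classical in
/-- `B^{-1/2}`: the inverse of the unique positive semidefinite square root of a
positive semidefinite matrix `B`. -/
noncomputable def invSqrt {n : ℕ} (B : Matrix (Fin n) (Fin n) ℝ) : Matrix (Fin n) (Fin n) ℝ :=
  if hB : B.PosSemidef then
    ((hB.1.eigenvectorUnitary : Matrix (Fin n) (Fin n) ℝ) *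
      Matrix.diagonal (Real.sqrt ∘ hB.1.eigenvalues) *
      (star (hB.1.eigenvectorUnitary : Matrix (Fin n) (Fin n) ℝ)))⁻¹
  else 0

/-- Squared Frobenius norm of a matrix. -/
noncomputable def frobSq {m n : ℕ} (H : Matrix (Fin m) (Fin n) ℝ) : ℝ :=
  ∑ i, ∑ j, (H i j) ^ 2

/-- Singular values of a matrix (square roots of the eigenvalues of `HᴴH`). -/
noncomputable def singVals {m n : ℕ} (H : Matrix (Fin m) (Fin n) ℝ) : Fin n → ℝ :=
  fun i => Real.sqrt ((by simpa using Matrix.isHermitian_conjTranspose_mul_self H : (Hᵀ * H).IsHermitian).eigenvalues i)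

/-- Nuclear norm: sum of the singular values. -/
noncomputable def nuclearNorm {m n : ℕ} (H : Matrix (Fin m) (Fin n) ℝ) : ℝ :=
  ∑ i, singVals H i

/-- Spectral norm: largest singular value. -/
noncomputable def specNorm {m n : ℕ} (H : Matrix (Fin m) (Fin n) ℝ) : ℝ :=
  ⨆ i, singVals H i

/-- Eigenvalues of a symmetric matrix, sorted in decreasing order
(`eigDesc B i` is the `i`-th largest eigenvalue). -/
noncomputable def eigDesc {n : ℕ} (B : Matrix (Fin n) (Fin n) ℝ) : Fin n → ℝ :=
  if hB : B.IsHermitian then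
    fun i => (hB.eigenvalues ∘ Tuple.sort hB.eigenvalues) i.rev
  else 0

/-- Law of a standard Gaussian random vector in `ℝⁿ` (i.i.d. `gaussianReal 0 1` entries). -/
noncomputable def stdGaussian (n : ℕ) : Measure (Fin n → ℝ) :=
  Measure.pi fun _ => gaussianReal 0 1

/-- Law of a random `n × ℓ` matrix with i.i.d. standard Gaussian entries. -/
noncomputable def stdGaussianMatrix (n ℓ : ℕ) : Measure (Fin n → Fin ℓ → ℝ) :=
  Measure.pi fun _ => Measure.pi fun _ => gaussianReal 0 1

/-- The truncated-spectral-decomposition preconditioner `P_r = A_r + I`, where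
`A_r = U_r Λ_r U_rᵀ` keeps the `r` leading eigenvalues. -/
noncomputable def truncP {n : ℕ} (U : Matrix (Fin n) (Fin n) ℝ) (lam : Fin n → ℝ) (r : ℕ) :
    Matrix (Fin n) (Fin n) ℝ :=
  U * Matrix.diagonal (fun i : Fin n => if (i : ℕ) < r then lam i else 0) * Uᵀ + 1

/-- The idealized preconditioned matrix `M_r = P_r^{-1/2} (A + I) P_r^{-1/2}`. -/
noncomputable def truncM {n : ℕ} (A U : Matrix (Fin n) (Fin n) ℝ) (lam : Fin n → ℝ) (r : ℕ) :
    Matrix (Fin n) (Fin n) ℝ :=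
  invSqrt (truncP U lam r) * (A + 1) * invSqrt (truncP U lam r)

/-- The Nyström approximation `Â = AΩ(ΩᵀAΩ)⁻¹ΩᵀA`. -/
noncomputable def nystrom {n ℓ : ℕ} (A : Matrix (Fin n) (Fin n) ℝ)
    (Ω : Matrix (Fin n) (Fin ℓ) ℝ) : Matrix (Fin n) (Fin n) ℝ :=
  A * Ω * (Ωᵀ * A * Ω)⁻¹ * Ωᵀ * A

/-- The Nyström-preconditioned matrix `M̂ = P̂^{-1/2} (A + I) P̂^{-1/2}` with `P̂ = Â + I`. -/
noncomputable def nysPrec {n ℓ : ℕ} (A : Matrix (Fin n) (Fin n) ℝ)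
    (Ω : Matrix (Fin n) (Fin ℓ) ℝ) : Matrix (Fin n) (Fin n) ℝ :=
  invSqrt (nystrom A Ω + 1) * (A + 1) * invSqrt (nystrom A Ω + 1)

/-! Expanding `w` in an orthonormal eigenbasis `(bᵢ)` of `B` preserves the standard Gaussian law
and turns the quadratic form into `∑ λᵢ xᵢ²` with independent standard Gaussian `xᵢ`. Its mean is
therefore `∑ λᵢ = tr B` and its variance `∑ λᵢ² Var[x²] = 2 ∑ λᵢ² = 2 ‖B‖_F²`, since
`Var[x²] = E[x⁴] - E[x²]² = 3 - 1`. Averaging `N` independent copies divides the variance by `N`. -/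

lemma deriv_mul_exp_sq_half {p p' q : ℝ → ℝ} (hp : ∀ t, HasDerivAt p (p' t) t)
    (hq : ∀ t, p' t + t * p t = q t) :
    deriv (fun t => p t * Real.exp (t ^ 2 / 2)) = fun t => q t * Real.exp (t ^ 2 / 2) := by
  ext t
  have he : HasDerivAt (fun t : ℝ => Real.exp (t ^ 2 / 2)) (Real.exp (t ^ 2 / 2) * t) t := by
    simpa using ((hasDerivAt_pow 2 t).div_const 2).exp
  rw [((hp t).fun_mul he).deriv, ← hq]
  ring

lemma integral_sq_gaussianReal : ∫ x, x ^ 2 ∂gaussianReal 0 1 = 1 := by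
  rw [← variance_of_integral_eq_zero aemeasurable_id' integral_id_gaussianReal]
  simp [variance_fun_id_gaussianReal]

lemma integral_pow_four_gaussianReal : ∫ x, x ^ 4 ∂gaussianReal 0 1 = 3 := by
  -- the fourth moment is the fourth derivative at `0` of the mgf `exp (t ^ 2 / 2)`
  have h := iteratedDeriv_mgf_zero (X := id) (μ := gaussianReal 0 1)
    (by simp [integrableExpSet_id_gaussianReal]) 4
  have hmgf : mgf id (gaussianReal 0 1) = fun t => 1 * Real.exp (t ^ 2 / 2) := by
    simp [mgf_id_gaussianReal]
  simp only [iteratedDeriv_succ, iteratedDeriv_zero, hmgf] at h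
  rw [deriv_mul_exp_sq_half (q := fun t => t) (fun t => hasDerivAt_const t 1) (by simp),
    deriv_mul_exp_sq_half (q := fun t => 1 + t ^ 2) hasDerivAt_id' (fun t => by ring),
    deriv_mul_exp_sq_half (q := fun t => 3 * t + t ^ 3)
      (fun t => (hasDerivAt_const t 1).fun_add (hasDerivAt_pow 2 t))
      (fun t => by push_cast; ring),
    deriv_mul_exp_sq_half (q := fun t => 3 + 6 * t ^ 2 + t ^ 4)
      (fun t => ((hasDerivAt_id' t).const_mul 3).fun_add (hasDerivAt_pow 3 t))
      (fun t => by push_cast; ring)] at h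
  simpa using h.symm

lemma memLp_sq_gaussianReal : MemLp (fun x => x ^ 2) 2 (gaussianReal 0 1) := by
  refine (memLp_two_iff_integrable_sq (by fun_prop)).mpr ?_
  simpa [← pow_mul, (by decide : Even 4).pow_abs] using
    (memLp_id_gaussianReal (μ := 0) (v := 1) 4).integrable_norm_pow'

lemma variance_sq_gaussianReal : Var[fun x => x ^ 2; gaussianReal 0 1] = 2 := by
  rw [variance_eq_sub memLp_sq_gaussianReal]
  simp only [Pi.pow_apply, ← pow_mul]
  rw [integral_pow_four_gaussianReal, integral_sq_gaussianReal]
  norm_num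

lemma measurePreserving_sum_smul_orthonormalBasis {ι : Type*} [Fintype ι]
    (b : OrthonormalBasis ι ℝ (EuclideanSpace ℝ ι)) :
    MeasurePreserving (fun x : ι → ℝ => WithLp.ofLp (∑ i, x i • b i))
      (Measure.pi fun _ => gaussianReal 0 1) (Measure.pi fun _ => gaussianReal 0 1) := by
  refine ⟨by fun_prop, ?_⟩
  change Measure.map (WithLp.ofLp ∘ fun x : ι → ℝ => ∑ i, x i • b i) _ = _
  rw [← Measure.map_map (by fun_prop) (by fun_prop), ← stdGaussian_eq_map_pi_orthonormalBasis,
    ← map_pi_eq_stdGaussian, Measure.map_map (by fun_prop) (by fun_prop)]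
  exact Measure.map_id

section QuadraticForm

variable {ι : Type*} [Fintype ι] [DecidableEq ι] {A : Matrix ι ι ℝ}

lemma trace_mul_self_eq_sum_eigenvalues_sq (hA : A.IsHermitian) :
    (A * A).trace = ∑ i, hA.eigenvalues i ^ 2 := by
  conv_lhs => rw [hA.spectral_theorem, ← map_mul, Unitary.conjStarAlgAut_apply, trace_mul_cycle,
    Unitary.coe_star_mul_self, one_mul, diagonal_mul_diagonal, trace_diagonal]
  simp [sq]

lemma dotProduct_mulVec_sum_smul_eigenvectorBasis (hA : A.IsHermitian) (x : ι → ℝ) :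
    WithLp.ofLp (∑ i, x i • hA.eigenvectorBasis i) ⬝ᵥ
        A *ᵥ WithLp.ofLp (∑ i, x i • hA.eigenvectorBasis i) =
      ∑ i, hA.eigenvalues i * x i ^ 2 := by
  have horth (i j : ι) : WithLp.ofLp (hA.eigenvectorBasis i) ⬝ᵥ
      WithLp.ofLp (hA.eigenvectorBasis j) = if i = j then 1 else 0 := by
    rw [← orthonormal_iff_ite.mp hA.eigenvectorBasis.orthonormal i j,
      EuclideanSpace.inner_eq_star_dotProduct, dotProduct_comm]
    rfl
  simp only [WithLp.ofLp_sum, WithLp.ofLp_smul, mulVec_sum, mulVec_smul,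
    hA.mulVec_eigenvectorBasis, sum_dotProduct, dotProduct_sum, smul_dotProduct, dotProduct_smul,
    horth, smul_eq_mul, mul_ite, mul_one, mul_zero, Finset.sum_ite_eq', Finset.mem_univ, if_true]
  exact Finset.sum_congr rfl fun i _ => by ring

lemma memLp_dotProduct_mulVec_gaussian (hA : A.IsHermitian) :
    MemLp (fun w => w ⬝ᵥ A *ᵥ w) 2 (Measure.pi fun _ : ι => gaussianReal 0 1) := by
  have hφ := measurePreserving_sum_smul_orthonormalBasis hA.eigenvectorBasis
  rw [← hφ.map_eq, memLp_map_measure_iff (by fun_prop) hφ.aemeasurable]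
  simp only [Function.comp_def, dotProduct_mulVec_sum_smul_eigenvectorBasis]
  exact memLp_finsetSum _ fun i _ =>
    (memLp_sq_gaussianReal.comp_measurePreserving (measurePreserving_eval _ i)).const_mul _

lemma integral_dotProduct_mulVec_gaussian (hA : A.IsHermitian) :
    ∫ w, w ⬝ᵥ A *ᵥ w ∂(Measure.pi fun _ : ι => gaussianReal 0 1) = A.trace := by
  have hφ := measurePreserving_sum_smul_orthonormalBasis hA.eigenvectorBasis
  rw [← hφ.map_eq, integral_map hφ.aemeasurable (by fun_prop)]
  simp only [dotProduct_mulVec_sum_smul_eigenvectorBasis]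
  rw [integral_finsetSum _ fun i _ => (integrable_comp_eval (f := fun x => x ^ 2)
    (memLp_sq_gaussianReal.integrable one_le_two)).const_mul _]
  simp_rw [integral_const_mul, integral_comp_eval (μ := fun _ : ι => gaussianReal 0 1)
    (f := fun x => x ^ 2) (by fun_prop), integral_sq_gaussianReal, hA.trace_eq_sum_eigenvalues]
  simp

lemma variance_dotProduct_mulVec_gaussian (hA : A.IsHermitian) :
    Var[fun w => w ⬝ᵥ A *ᵥ w; Measure.pi fun _ : ι => gaussianReal 0 1] = 2 * (A * A).trace := by
  have hφ := measurePreserving_sum_smul_orthonormalBasis hA.eigenvectorBasis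
  rw [← hφ.variance_fun_comp (by fun_prop)]
  simp only [dotProduct_mulVec_sum_smul_eigenvectorBasis]
  rw [← Finset.sum_fn, variance_sum_pi (X := fun i x => hA.eigenvalues i * x ^ 2)
    fun i => memLp_sq_gaussianReal.const_mul _]
  simp_rw [variance_const_mul, variance_sq_gaussianReal, trace_mul_self_eq_sum_eigenvalues_sq hA,
    Finset.mul_sum]
  exact Finset.sum_congr rfl fun i _ => by ring

end QuadraticForm

section SampleMean

variable {Ω : Type*} [MeasurableSpace Ω] {μ : Measure Ω} [IsProbabilityMeasure μ]

lemma integral_sampleMean {f : Ω → ℝ} (hf : Integrable f μ) {N : ℕ} (hN : N ≠ 0) :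
    ∫ ω, (1 / (N : ℝ)) * ∑ i, f (ω i) ∂Measure.pi (fun _ : Fin N => μ) = μ[f] := by
  rw [integral_const_mul, integral_finsetSum _ fun i _ => integrable_comp_eval hf]
  simp_rw [integral_comp_eval (μ := fun _ : Fin N => μ) hf.aestronglyMeasurable]
  simp only [one_div, Finset.sum_const, Finset.card_univ, Fintype.card_fin, nsmul_eq_mul]
  field_simp

lemma variance_sampleMean {f : Ω → ℝ} (hf : MemLp f 2 μ) (N : ℕ) :
    Var[fun ω => (1 / (N : ℝ)) * ∑ i, f (ω i); Measure.pi (fun _ : Fin N => μ)] =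
      Var[f; μ] / N := by
  rw [variance_const_mul, ← Finset.sum_fn,
    variance_sum_pi (μ := fun _ : Fin N => μ) (X := fun _ => f) fun _ => hf]
  simp only [one_div, inv_pow, Finset.sum_const, Finset.card_univ, Fintype.card_fin, nsmul_eq_mul]
  rcases eq_or_ne N 0 with rfl | hN
  · simp
  · field_simp

lemma integral_sampleMean_sub_sq {f : Ω → ℝ} (hf : MemLp f 2 μ) {N : ℕ} (hN : N ≠ 0) :
    ∫ ω, ((1 / (N : ℝ)) * ∑ i, f (ω i) - μ[f]) ^ 2 ∂Measure.pi (fun _ : Fin N => μ) =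
      Var[f; μ] / N := by
  have hmean : MemLp (fun ω => (1 / (N : ℝ)) * ∑ i, f (ω i)) 2 (Measure.pi fun _ : Fin N => μ) :=
    (memLp_finsetSum _ fun i _ => hf.comp_measurePreserving (measurePreserving_eval _ i)).const_mul _
  rw [← variance_sampleMean hf N, variance_eq_integral hmean.aemeasurable,
    integral_sampleMean (hf.integrable one_le_two) hN]

end SampleMean

lemma frobSq_eq_trace_transpose_mul_self {m n : ℕ} (H : Matrix (Fin m) (Fin n) ℝ) :
    frobSq H = (Hᵀ * H).trace := by
  simp only [frobSq, trace, diag, mul_apply, transpose_apply, sq]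
  exact Finset.sum_comm

theorem stmt2 {n N : ℕ} (hN : 1 ≤ N) (B : Matrix (Fin n) (Fin n) ℝ) (hB : B.IsSymm) :
    (∫ w : Fin N → Fin n → ℝ,
        ((1 / (N : ℝ)) * ∑ i, w i ⬝ᵥ B.mulVec (w i) - B.trace) ^ 2
        ∂(Measure.pi fun _ : Fin N => stdGaussian n))
      = 2 / (N : ℝ) * frobSq B := by
  have hA : B.IsHermitian := isHermitian_iff_isSymm.mpr hB
  rw [show stdGaussian n = Measure.pi fun _ => gaussianReal 0 1 from rfl,
    ← integral_dotProduct_mulVec_gaussian hA,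
    integral_sampleMean_sub_sq (memLp_dotProduct_mulVec_gaussian hA) (by omega),
    variance_dotProduct_mulVec_gaussian hA, frobSq_eq_trace_transpose_mul_self, hB.eq]
  ring
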